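/- arXiv:math/0010231 — 2 statements merged into one kernel-verified Lean document; each statement's English description precedes it below -/
import Mathlib

section
/- Let τ(X) = -P·Xᵀ·P⁻¹ on sl(3,ℂ) with P = [[0,1,0],[-1,0,0],[0,0,1]]. Define the four subspaces of sl(3,ℂ): g₀ = { block matrices [[x,0],[0,0]] with x a trace-zero 2×2 complex matrix }, g₂ = ℂ·Y where Y = (i/3)·diag(1,1,-2), g₋₁ = { [[0,0,-ia],[0,0,b],[-ib,a,0]] : a,b ∈ ℂ }, and g₁ = { [[0,0,ia],[0,0,b],[ib,a,0]] : a,b ∈ ℂ }. Then sl(3,ℂ) is the internal direct sum g₀ ⊕ g₂ ⊕ g₋₁ ⊕ g₁, and τ acts on g₀, g₂, g₋₁, g₁ as multiplication by 1, -1, -i, i respectively. -/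
/-!
Each of `g₀, g₂, g₋₁, g₁` lies in the eigenspace of the linear map `τ` for the eigenvalue
`1, -1, -i, i` respectively. These eigenvalues are distinct, so eigenspace independence makes a
decomposition `X = X₀ + X₂ + X₋₁ + X₁` unique; one exists by an explicit formula.
-/
open Matrix

noncomputable section

/-- The matrix `P = [[0,1,0],[-1,0,0],[0,0,1]]`. -/
def Pmat : Matrix (Fin 3) (Fin 3) ℂ := !![0,1,0; -1,0,0; 0,0,1]

/-- `τ(X) = -P ⬝ Xᵀ ⬝ P⁻¹`. -/
def tauLie (X : Matrix (Fin 3) (Fin 3) ℂ) : Matrix (Fin 3) (Fin 3) ℂ :=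
  -(Pmat * Xᵀ * Pmat⁻¹)

/-- `Y = (i/3)·diag(1,1,-2)`. -/
def Ymat : Matrix (Fin 3) (Fin 3) ℂ := (Complex.I / 3) • !![1,0,0; 0,1,0; 0,0,-2]

/-- `g₀`: trace-zero 2×2 blocks in the upper left corner. -/
def g0 : Set (Matrix (Fin 3) (Fin 3) ℂ) :=
  {X | ∃ x : Matrix (Fin 2) (Fin 2) ℂ, x.trace = 0 ∧
    X = !![x 0 0, x 0 1, 0; x 1 0, x 1 1, 0; 0, 0, 0]}

/-- `g₂ = ℂ·Y`. -/
def g2 : Set (Matrix (Fin 3) (Fin 3) ℂ) := {X | ∃ c : ℂ, X = c • Ymat}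

/-- `g₋₁ = { [[0,0,-ia],[0,0,b],[-ib,a,0]] : a,b ∈ ℂ }`. -/
def gm1 : Set (Matrix (Fin 3) (Fin 3) ℂ) :=
  {X | ∃ a b : ℂ,
    X = !![0, 0, -(Complex.I * a); 0, 0, b; -(Complex.I * b), a, 0]}

/-- `g₁ = { [[0,0,ia],[0,0,b],[ib,a,0]] : a,b ∈ ℂ }`. -/
def g1 : Set (Matrix (Fin 3) (Fin 3) ℂ) :=
  {X | ∃ a b : ℂ,
    X = !![0, 0, Complex.I * a; 0, 0, b; Complex.I * b, a, 0]}

theorem Module.End.eq_of_sum_eigenvectors_eq {ι R M : Type*} [Fintype ι] [CommRing R]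
    [IsDomain R] [AddCommGroup M] [Module R M] [Module.IsTorsionFree R M] (f : Module.End R M)
    {μ : ι → R} (hμ : Function.Injective μ) {v w : ι → M} (hv : ∀ i, f (v i) = μ i • v i)
    (hw : ∀ i, f (w i) = μ i • w i) (h : ∑ i, v i = ∑ i, w i) : v = w :=
  funext fun i => (iSupIndep_iff_finsetSum_eq_imp_eq _).1 (f.eigenspaces_iSupIndep.comp hμ)
    Finset.univ v w (fun j _ => ⟨mem_eigenspace_iff.2 (hv j), mem_eigenspace_iff.2 (hw j)⟩) h
    i (Finset.mem_univ i)

lemma Pmat_inv : Pmat⁻¹ = !![0,-1,0; 1,0,0; 0,0,1] :=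
  inv_eq_right_inv <| by simp [Pmat, one_fin_three]

lemma tauLie_eq (X : Matrix (Fin 3) (Fin 3) ℂ) :
    tauLie X = !![-X 1 1, X 0 1, -X 2 1; X 1 0, -X 0 0, X 2 0; -X 1 2, X 0 2, -X 2 2] := by
  rw [tauLie, Pmat_inv]
  ext i j
  fin_cases i <;> fin_cases j <;>
    simp [Pmat, vecMul, dotProduct, mul_apply, Fin.sum_univ_three]

@[simps]
def tauLinear : Module.End ℂ (Matrix (Fin 3) (Fin 3) ℂ) where
  toFun := tauLie
  map_add' X Y := by simp only [tauLie, transpose_add, Matrix.mul_add, Matrix.add_mul, neg_add]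
  map_smul' c X := by simp [tauLie]

section

variable {X : Matrix (Fin 3) (Fin 3) ℂ}

lemma trace_eq_zero_of_mem_g0 (hX : X ∈ g0) : X.trace = 0 := by
  obtain ⟨x, hx, rfl⟩ := hX
  simpa [trace_fin_three, trace_fin_two] using hx

lemma trace_eq_zero_of_mem_g2 (hX : X ∈ g2) : X.trace = 0 := by
  obtain ⟨c, rfl⟩ := hX
  rw [Ymat, trace_smul, trace_smul, trace_fin_three]
  simp [one_add_one_eq_two]

lemma trace_eq_zero_of_mem_gm1 (hX : X ∈ gm1) : X.trace = 0 := by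
  obtain ⟨a, b, rfl⟩ := hX
  simp [trace_fin_three]

lemma trace_eq_zero_of_mem_g1 (hX : X ∈ g1) : X.trace = 0 := by
  obtain ⟨a, b, rfl⟩ := hX
  simp [trace_fin_three]

lemma tauLie_eq_self_of_mem_g0 (hX : X ∈ g0) : tauLie X = X := by
  obtain ⟨x, hx, rfl⟩ := hX
  have hx : x 1 1 = -x 0 0 := by rw [trace_fin_two] at hx; linear_combination hx
  simp [tauLie_eq, hx]

lemma tauLie_eq_neg_of_mem_g2 (hX : X ∈ g2) : tauLie X = -X := by
  obtain ⟨c, rfl⟩ := hX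
  simp [tauLie_eq, Ymat]

lemma tauLie_eq_neg_I_smul_of_mem_gm1 (hX : X ∈ gm1) : tauLie X = -(Complex.I • X) := by
  obtain ⟨a, b, rfl⟩ := hX
  simp [tauLie_eq, ← mul_assoc]

lemma tauLie_eq_I_smul_of_mem_g1 (hX : X ∈ g1) : tauLie X = Complex.I • X := by
  obtain ⟨a, b, rfl⟩ := hX
  simp [tauLie_eq, ← mul_assoc]

lemma exists_add_g0_g2_gm1_g1_eq_of_trace_eq_zero (hX : X.trace = 0) :
    ∃ p : g0 × g2 × gm1 × g1, (p.1 : Matrix (Fin 3) (Fin 3) ℂ) + p.2.1 + p.2.2.1 + p.2.2.2 = X := by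
  -- The coefficient of `Y` is read off the (2,2) entry; the entries outside the 2×2 block split
  -- into their `∓i`-eigencomponents.
  refine ⟨⟨⟨_, !![X 0 0 + X 2 2 / 2, X 0 1; X 1 0, X 1 1 + X 2 2 / 2], ?_, rfl⟩,
    ⟨_, 3 * Complex.I / 2 * X 2 2, rfl⟩,
    ⟨_, (X 2 1 + Complex.I * X 0 2) / 2, (X 1 2 + Complex.I * X 2 0) / 2, rfl⟩,
    ⟨_, (X 2 1 - Complex.I * X 0 2) / 2, (X 1 2 - Complex.I * X 2 0) / 2, rfl⟩⟩, ?_⟩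
  · rw [trace_fin_three] at hX
    simp only [trace_fin_two, of_apply, cons_val', cons_val_zero, cons_val_fin_one, cons_val_one]
    linear_combination hX
  · ext i j
    fin_cases i <;> fin_cases j <;> simp [Ymat] <;> grind [Complex.I_sq]

end

lemma injective_add_g0_g2_gm1_g1 : Function.Injective
    fun p : g0 × g2 × gm1 × g1 => (p.1 : Matrix (Fin 3) (Fin 3) ℂ) + p.2.1 + p.2.2.1 + p.2.2.2 := by
  let parts (p : g0 × g2 × gm1 × g1) : Fin 4 → Matrix (Fin 3) (Fin 3) ℂ :=
    ![p.1, p.2.1, p.2.2.1, p.2.2.2]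
  have hμ : Function.Injective ![1, -1, -Complex.I, Complex.I] := by
    intro i j
    fin_cases i <;> fin_cases j <;> norm_num [Complex.ext_iff]
  have eigen (p : g0 × g2 × gm1 × g1) (i : Fin 4) :
      tauLinear (parts p i) = ![1, -1, -Complex.I, Complex.I] i • parts p i := by
    fin_cases i
    · simpa [parts] using tauLie_eq_self_of_mem_g0 p.1.2
    · simpa [parts] using tauLie_eq_neg_of_mem_g2 p.2.1.2
    · simpa [parts] using tauLie_eq_neg_I_smul_of_mem_gm1 p.2.2.1.2
    · simpa [parts] using tauLie_eq_I_smul_of_mem_g1 p.2.2.2.2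
  intro p q h
  have hpq := congrFun <| tauLinear.eq_of_sum_eigenvectors_eq hμ (eigen p) (eigen q)
    (by simpa [parts, Fin.sum_univ_four] using h)
  exact Prod.ext (Subtype.ext (hpq 0)) <| Prod.ext (Subtype.ext (hpq 1)) <|
    Prod.ext (Subtype.ext (hpq 2)) (Subtype.ext (hpq 3))

theorem eigenspace_decomposition_sl3 :
    -- each subspace is contained in sl(3,ℂ)
    (∀ X ∈ g0, X.trace = 0) ∧ (∀ X ∈ g2, X.trace = 0) ∧
    (∀ X ∈ gm1, X.trace = 0) ∧ (∀ X ∈ g1, X.trace = 0) ∧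
    -- internal direct sum: unique decomposition of every element of sl(3,ℂ)
    (∀ X : Matrix (Fin 3) (Fin 3) ℂ, X.trace = 0 →
      ∃! p : g0 × g2 × gm1 × g1,
        (p.1 : Matrix (Fin 3) (Fin 3) ℂ) + p.2.1 + p.2.2.1 + p.2.2.2 = X) ∧
    -- τ acts by 1, -1, -i, i respectively
    (∀ X ∈ g0, tauLie X = X) ∧
    (∀ X ∈ g2, tauLie X = -X) ∧
    (∀ X ∈ gm1, tauLie X = -(Complex.I • X)) ∧
    (∀ X ∈ g1, tauLie X = Complex.I • X) := by
  refine ⟨fun _ => trace_eq_zero_of_mem_g0, fun _ => trace_eq_zero_of_mem_g2,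
    fun _ => trace_eq_zero_of_mem_gm1, fun _ => trace_eq_zero_of_mem_g1, fun X hX => ?_,
    fun _ => tauLie_eq_self_of_mem_g0, fun _ => tauLie_eq_neg_of_mem_g2, fun _ => tauLie_eq_neg_I_smul_of_mem_gm1,
    fun _ => tauLie_eq_I_smul_of_mem_g1⟩
  obtain ⟨p, hp⟩ := exists_add_g0_g2_gm1_g1_eq_of_trace_eq_zero hX
  exact ⟨p, hp, fun q hq => injective_add_g0_g2_gm1_g1 (hq.trans hp.symm)⟩
end
end

section
/- Let b, c ∈ ℂ with Im(conj(b)·c) > 0, set a = -(conj(c) + i·conj(b))/3 and r = sqrt(8·Im(conj(b)·c)) > 0. For λ ∈ ℂ, λ ≠ 0, define the 3×3 complex matrix M_λ = [[b - i·λ⁻²·a, c, λ⁻¹·r/2], [c, -b - i·λ⁻²·a, -i·λ⁻¹·r/2], [-λ⁻¹·r/2, i·λ⁻¹·r/2, 2·i·λ⁻²·a]]. Then: (i) tr M_λ = 0 for all λ ≠ 0; (ii) the twisting condition τ(M_λ) = M_{iλ} holds for all λ ≠ 0, where τ(X) = -P·Xᵀ·P⁻¹ with P = [[0,1,0],[-1,0,0],[0,0,1]];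 (iii) for every λ with |λ| = 1, M_λ commutes with -(M_λ)*, i.e. [M_λ, -(M_λ)*] = 0. -/
open Matrix

noncomputable section

lemma conjT3 (A : Matrix (Fin 3) (Fin 3) ℂ) :
    Aᴴ = !![(starRingEnd ℂ) (A 0 0), (starRingEnd ℂ) (A 1 0), (starRingEnd ℂ) (A 2 0);
            (starRingEnd ℂ) (A 0 1), (starRingEnd ℂ) (A 1 1), (starRingEnd ℂ) (A 2 1);
            (starRingEnd ℂ) (A 0 2), (starRingEnd ℂ) (A 1 2), (starRingEnd ℂ) (A 2 2)] := by
  ext i j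
  fin_cases i <;> fin_cases j <;>
    simp [Matrix.conjTranspose_apply, Matrix.vecHead, Matrix.vecTail, RCLike.star_def]

set_option maxHeartbeats 2000000 in
/-- The vacuum solution data `M_λ`: traceless, twisted, and `[M_λ, -(M_λ)*] = 0`
for `|λ| = 1`. -/
theorem vacuum_solution (b c : ℂ)
    (hbc : 0 < ((starRingEnd ℂ) b * c).im)
    (a : ℂ) (ha : a = -((starRingEnd ℂ) c + Complex.I * (starRingEnd ℂ) b) / 3)
    (r : ℝ) (hr : r = Real.sqrt (8 * ((starRingEnd ℂ) b * c).im))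
    (M : ℂ → Matrix (Fin 3) (Fin 3) ℂ)
    (hM : ∀ l : ℂ, l ≠ 0 →
      M l = !![b - Complex.I * l⁻¹ ^ 2 * a, c, l⁻¹ * r / 2;
               c, -b - Complex.I * l⁻¹ ^ 2 * a, -Complex.I * l⁻¹ * r / 2;
               -(l⁻¹ * r / 2), Complex.I * l⁻¹ * r / 2,
                 2 * Complex.I * l⁻¹ ^ 2 * a]) :
    -- (i) trace zero
    (∀ l : ℂ, l ≠ 0 → (M l).trace = 0) ∧
    -- (ii) twisting condition τ(M_λ) = M_{iλ}
    (∀ l : ℂ, l ≠ 0 → tauLie (M l) = M (Complex.I * l)) ∧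
    -- (iii) for |λ| = 1, M_λ commutes with -(M_λ)*
    (∀ l : ℂ, ‖l‖ = 1 →
      M l * -(M l)ᴴ - -(M l)ᴴ * M l = 0) := by
  refine ⟨?_, ?_, ?_⟩
  · intro l hl
    rw [hM l hl, Matrix.trace_fin_three]
    simp
    ring
  · intro l hl
    have hIl : Complex.I * l ≠ 0 := mul_ne_zero Complex.I_ne_zero hl
    rw [tauLie, hM l hl, hM _ hIl, Pmat_inv]
    ext i j
    fin_cases i <;> fin_cases j <;>
      simp [Pmat, Matrix.mul_apply, Fin.sum_univ_three, mul_inv, Complex.inv_I,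
        mul_pow, neg_sq, Complex.I_sq, Matrix.vecHead, Matrix.vecTail,
        Matrix.transpose_apply, Matrix.vecMul, dotProduct] <;>
      (try ring) <;> (simp only [Complex.I_sq, true_or] <;> ring)
  · intro l hl
    have hl0 : l ≠ 0 := by
      intro h; rw [h] at hl; simp at hl
    have hlv : l * l⁻¹ = 1 := mul_inv_cancel₀ hl0
    have hIsq : Complex.I ^ 2 = -1 := Complex.I_sq
    have hlu : l * (starRingEnd ℂ) l = 1 := by
      rw [Complex.mul_conj]
      norm_cast
      rw [Complex.normSq_eq_norm_sq, hl, one_pow]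
    have hkl : (starRingEnd ℂ) l = l⁻¹ :=
      (inv_eq_of_mul_eq_one_right hlu).symm
    have him : 0 ≤ 8 * ((starRingEnd ℂ) b * c).im := by positivity
    have hr2 : (r : ℂ) ^ 2 = 4 * Complex.I *
        (b * (starRingEnd ℂ) c - (starRingEnd ℂ) b * c) := by
      have h1 : (r : ℝ) ^ 2 = 8 * ((starRingEnd ℂ) b * c).im := by
        rw [hr, Real.sq_sqrt him]
      have h2 : ((r : ℂ)) ^ 2 = ((8 * ((starRingEnd ℂ) b * c).im : ℝ) : ℂ) := by
        exact_mod_cast congrArg (Complex.ofReal) h1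
      have hz := Complex.sub_conj ((starRingEnd ℂ) b * c)
      have h4 : (starRingEnd ℂ) ((starRingEnd ℂ) b * c) = b * (starRingEnd ℂ) c := by
        rw [_root_.map_mul]; simp
      rw [h4] at hz
      push_cast at h2 hz
      rw [h2]
      linear_combination 4 * Complex.I * hz +
        (8 * (((starRingEnd ℂ) b * c).im : ℂ)) * hIsq
    rw [hM l hl0, conjT3]
    subst ha
    ext i j
    fin_cases i <;> fin_cases j <;>
      simp [Matrix.mul_apply, Fin.sum_univ_three, Matrix.conjTranspose_apply,
        Complex.star_def, _root_.map_mul, _root_.map_add, _root_.map_sub,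
        _root_.map_neg, map_div₀, map_inv₀, _root_.map_pow, _root_.map_ofNat,
        Complex.conj_I, Complex.conj_ofReal, hkl, inv_inv,
        Matrix.vecHead, Matrix.vecTail]
    all_goals first
      | linear_combination ((-1/2:ℂ)*l*l⁻¹*Complex.I) * hr2 + ((2:ℂ)*c*((starRingEnd ℂ) b)*l*l⁻¹ + (-2:ℂ)*b*((starRingEnd ℂ) c)*l*l⁻¹) * hIsq + ((-2:ℂ)*c*((starRingEnd ℂ) b) + (2:ℂ)*b*((starRingEnd ℂ) c)) * hlv
      | linear_combination ((1/2:ℂ)*((starRingEnd ℂ) b)*(r:ℂ)*l*l⁻¹^2 + (1/2:ℂ)*b*(r:ℂ)*l^2*l⁻¹) * hIsq + ((1/2:ℂ)*((starRingEnd ℂ) c)*(r:ℂ)*l⁻¹*Complex.I + (-1/2:ℂ)*((starRingEnd ℂ) b)*(r:ℂ)*l⁻¹ + (-1/2:ℂ)*c*(r:ℂ)*l*Complex.I + (-1/2:ℂ)*b*(r:ℂ)*l) * hlv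
      | linear_combination ((1/2:ℂ)*l*l⁻¹*Complex.I) * hr2 + ((-2:ℂ)*c*((starRingEnd ℂ) b)*l*l⁻¹ + (2:ℂ)*b*((starRingEnd ℂ) c)*l*l⁻¹) * hIsq + ((2:ℂ)*c*((starRingEnd ℂ) b) + (-2:ℂ)*b*((starRingEnd ℂ) c)) * hlv
      | linear_combination ((1/2:ℂ)*((starRingEnd ℂ) c)*(r:ℂ)*l*l⁻¹^2 + (1/2:ℂ)*((starRingEnd ℂ) b)*(r:ℂ)*l*l⁻¹^2*Complex.I + (1/2:ℂ)*c*(r:ℂ)*l^2*l⁻¹ + (-1/2:ℂ)*b*(r:ℂ)*l^2*l⁻¹*Complex.I) * hIsq + ((-1/2:ℂ)*((starRingEnd ℂ) c)*(r:ℂ)*l⁻¹ + (-1/2:ℂ)*((starRingEnd ℂ) b)*(r:ℂ)*l⁻¹*Complex.I + (-1/2:ℂ)*c*(r:ℂ)*l + (1/2:ℂ)*b*(r:ℂ)*l*Complex.I) * hlv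
      | ring
end
end
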